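/- arXiv:1712.07824 — 4 statements merged into one kernel-verified Lean document; each statement's English description precedes it below -/
import Mathlib

section
/- For all real numbers x, y > 1, the Beta function satisfies B(x,y) ≤ 1/(xy). -/
/-!
For `x, y > 1` the factors `z ^ (x - 1)` and `(1 - z) ^ (y - 1)` of the Beta integrand are
increasing and decreasing on `[0, 1]`, so by Chebyshev's integral inequality the integral of their
product is at most the product of their integrals, `1 / x * (1 / y)`. Chebyshev's inequality
follows by integrating `(f s - f t) * (g s - g t) ≤ 0` over `s` and then over `t`.
-/

open Set intervalIntegral
open MeasureTheory (volume ae_restrict_of_forall_mem)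

/-- The Euler Beta function `B(x,y) = ∫₀¹ z^(x-1) (1-z)^(y-1) dz`. -/
noncomputable def betaFun (x y : ℝ) : ℝ :=
  ∫ z in (0:ℝ)..1, z ^ (x - 1) * (1 - z) ^ (y - 1)

section Chebyshev

variable {f g : ℝ → ℝ} {a b : ℝ}

lemma MonotoneOn.sub_mul_sub_nonpos_of_antitoneOn {α β : Type*} [LinearOrder α] [Ring β]
    [LinearOrder β] [IsOrderedRing β] {f g : α → β} {s : Set α} (hf : MonotoneOn f s)
    (hg : AntitoneOn g s) {x y : α} (hx : x ∈ s) (hy : y ∈ s) :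
    (f x - f y) * (g x - g y) ≤ 0 := by
  rcases le_total x y with hxy | hyx
  · exact mul_nonpos_of_nonpos_of_nonneg (sub_nonpos.2 (hf hx hy hxy))
      (sub_nonneg.2 (hg hx hy hxy))
  · exact mul_nonpos_of_nonneg_of_nonpos (sub_nonneg.2 (hf hy hx hyx))
      (sub_nonpos.2 (hg hy hx hyx))

lemma IntervalIntegrable.mul_antitoneOn (hf : IntervalIntegrable f volume a b) (hab : a ≤ b)
    (hg : AntitoneOn g (Icc a b)) :
    IntervalIntegrable (fun s => f s * g s) volume a b := by
  have hg_int : IntervalIntegrable g volume a b := (uIcc_of_le hab ▸ hg).intervalIntegrable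
  rw [intervalIntegrable_iff_integrableOn_Ioc_of_le hab] at hf hg_int ⊢
  refine hf.mul_bdd hg_int.aestronglyMeasurable (c := max |g b| |g a|) ?_
  refine ae_restrict_of_forall_mem measurableSet_Ioc fun s hs => ?_
  have hs' : s ∈ Icc a b := Ioc_subset_Icc_self hs
  rw [Real.norm_eq_abs]
  exact abs_le_max_abs_abs (hg hs' (right_mem_Icc.2 hab) hs'.2) (hg (left_mem_Icc.2 hab) hs' hs'.1)

theorem MonotoneOn.sub_mul_integral_mul_le_integral_mul_integral (hab : a ≤ b)
    (hf : MonotoneOn f (Icc a b)) (hg : AntitoneOn g (Icc a b)) :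
    (b - a) * ∫ s in a..b, f s * g s ≤ (∫ s in a..b, f s) * ∫ s in a..b, g s := by
  have hfi : IntervalIntegrable f volume a b := (uIcc_of_le hab ▸ hf).intervalIntegrable
  have hgi : IntervalIntegrable g volume a b := (uIcc_of_le hab ▸ hg).intervalIntegrable
  have hfgi := hfi.mul_antitoneOn hab hg
  have inner : ∀ t ∈ Icc a b, (∫ s in a..b, f s * g s) + (b - a) * (f t * g t) ≤
      g t * (∫ s in a..b, f s) + f t * ∫ s in a..b, g s := by
    intro t ht
    have := integral_mono_on hab (hfgi.add intervalIntegrable_const)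
      ((hfi.mul_const (g t)).add (hgi.const_mul (f t))) fun s hs =>
        show f s * g s + f t * g t ≤ f s * g t + f t * g s by
          linarith [hf.sub_mul_sub_nonpos_of_antitoneOn hg hs ht]
    rw [integral_add hfgi intervalIntegrable_const,
      integral_add (hfi.mul_const _) (hgi.const_mul _), integral_const,
      integral_mul_const, integral_const_mul, smul_eq_mul] at this
    linarith
  have outer := integral_mono_on hab (intervalIntegrable_const.add (hfgi.const_mul (b - a)))
    ((hgi.mul_const _).add (hfi.mul_const _)) inner
  rw [integral_add intervalIntegrable_const (hfgi.const_mul _),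
    integral_add (hgi.mul_const _) (hfi.mul_const _), integral_const, integral_const_mul,
    integral_mul_const, integral_mul_const, smul_eq_mul] at outer
  linarith

end Chebyshev

lemma integral_rpow_sub_one {p : ℝ} (hp : 0 < p) : ∫ z in (0:ℝ)..1, z ^ (p - 1) = 1 / p := by
  rw [integral_rpow (Or.inl (by linarith)), sub_add_cancel, Real.one_rpow,
    Real.zero_rpow hp.ne', sub_zero]

lemma integral_one_sub_rpow_sub_one {p : ℝ} (hp : 0 < p) :
    ∫ z in (0:ℝ)..1, (1 - z) ^ (p - 1) = 1 / p := by
  rw [integral_comp_sub_left (fun z => z ^ (p - 1)), sub_self, sub_zero, integral_rpow_sub_one hp]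

/-- For all real `x, y > 1`, `B(x,y) ≤ 1/(x*y)`. -/
theorem beta_le_inv_mul (x y : ℝ) (hx : 1 < x) (hy : 1 < y) :
    betaFun x y ≤ 1 / (x * y) := by
  have hf : MonotoneOn (fun z : ℝ => z ^ (x - 1)) (Icc 0 1) :=
    (Real.monotoneOn_rpow_Ici_of_exponent_nonneg (by linarith)).mono Icc_subset_Ici_self
  have hg : AntitoneOn (fun z : ℝ => (1 - z) ^ (y - 1)) (Icc 0 1) := fun _ _ t ht hst =>
    Real.rpow_le_rpow (sub_nonneg.2 ht.2) (by linarith) (by linarith)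
  have := hf.sub_mul_integral_mul_le_integral_mul_integral zero_le_one hg
  rwa [sub_zero, one_mul, integral_rpow_sub_one (by linarith),
    integral_one_sub_rpow_sub_one (by linarith), one_div_mul_one_div] at this
end

section
/- For all real x with 0 ≤ x ≤ 1, we have 2^{x-1} ≤ Γ(x+1) ≤ 1. -/
/-! Both bounds come from convexity of `Γ` on `(0, ∞)`, with `Γ 1 = Γ 2 = 1`. Convexity of `Γ`
itself bounds `Γ` by `1` on `[1, 2]`. Log-convexity, applied to `2 = x (x + 1) + (1 - x) (x + 2)`
together with `Γ (x + 2) = (x + 1) Γ (x + 1)`, gives `(x + 1) ^ (x - 1) ≤ Γ (x + 1)`, and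
`(x + 1) ^ (x - 1) ≥ 2 ^ (x - 1)` because the exponent is nonpositive. -/

open Set

namespace Real

theorem Gamma_le_one_of_mem_Icc {x : ℝ} (hx : x ∈ Icc (1 : ℝ) 2) : Gamma x ≤ 1 := by
  have h := convexOn_Gamma.le_on_segment (x := 1) (y := 2) (by norm_num) (by norm_num)
    (by rwa [segment_eq_Icc (by norm_num)])
  rwa [Gamma_one, Gamma_two, max_self] at h

theorem Gamma_add_one_le_Gamma_add_mul_rpow {s t : ℝ} (hs : 0 < s) (ht₀ : 0 ≤ t) (ht₁ : t ≤ 1) :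
    Gamma (s + 1) ≤ Gamma (s + t) * (s + t) ^ (1 - t) := by
  have hst : 0 < s + t := by linarith
  have hΓ : 0 < Gamma (s + t) := Gamma_pos_of_pos hst
  have hlog := convexOn_log_Gamma.2 (x := s + t) (y := s + t + 1) hst (by simp; linarith)
    ht₀ (by linarith : 0 ≤ 1 - t) (by ring)
  simp only [smul_eq_mul, Function.comp, Gamma_add_one hst.ne',
    log_mul hst.ne' hΓ.ne'] at hlog
  rw [show t * (s + t) + (1 - t) * (s + t + 1) = s + 1 by ring] at hlog
  rw [← log_le_log_iff (Gamma_pos_of_pos (by linarith)) (by positivity),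
    log_mul hΓ.ne' (rpow_pos_of_pos hst _).ne', log_rpow hst]
  linarith

theorem rpow_sub_one_le_Gamma_add_one {x : ℝ} (hx₀ : 0 ≤ x) (hx₁ : x ≤ 1) :
    (x + 1) ^ (x - 1) ≤ Gamma (x + 1) := by
  have h := Gamma_add_one_le_Gamma_add_mul_rpow one_pos hx₀ hx₁
  rw [one_add_one_eq_two, Gamma_two, add_comm 1 x] at h
  rwa [show x - 1 = -(1 - x) by ring, rpow_neg (by linarith), inv_le_iff_one_le_mul₀
    (by positivity)]

end Real

/-- For all real `x` with `0 ≤ x ≤ 1`, `2^(x-1) ≤ Γ(x+1) ≤ 1`. -/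
theorem gamma_bounds_on_unit_interval (x : ℝ) (hx0 : 0 ≤ x) (hx1 : x ≤ 1) :
    (2 : ℝ) ^ (x - 1) ≤ Real.Gamma (x + 1) ∧ Real.Gamma (x + 1) ≤ 1 := by
  refine ⟨?_, Real.Gamma_le_one_of_mem_Icc ⟨by linarith, by linarith⟩⟩
  calc (2 : ℝ) ^ (x - 1) ≤ (x + 1) ^ (x - 1) :=
        Real.rpow_le_rpow_of_nonpos (by linarith) (by linarith) (by linarith)
    _ ≤ Real.Gamma (x + 1) := Real.rpow_sub_one_le_Gamma_add_one hx0 hx1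
end

section
/- For all real x > 1, x^{x-γ}/e^{x-1} < Γ(x) < x^{x-1/2}/e^{x-1}, where γ ≈ 0.577215 is the Euler–Mascheroni constant. -/
/-!
Write `φ(y) = 1/y - log (1 + 1/y)` (`eulerTerm`) and `S(x) = ∑ₙ φ(n + x)` (`eulerSeries`).
Differentiating Euler's limit formula for `log Γ` term by term gives
`(log Γ)'(x) = log x - S(x)`, and `S(1) = γ`. Comparing `φ` with telescoping differences, via the
series `log (1 + 1/y) = 2 ∑ₖ (2y+1)^(-2k-1) / (2k+1)`, gives `1/(2x) < S(x) ≤ 1/(2x) + 1/(12x²)`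
and `-S'(x) ≥ 1/(2x²) + 1/(6x³) - 1/(30x⁵)`. Hence `(x S(x))' < 0`, so `x S(x) < γ` for `x > 1`.
Therefore `log Γ(x) - ((x - γ) log x - x + 1)` and `(x - 1/2) log x - x + 1 - log Γ(x)`, whose
derivatives are `γ/x - S(x)` and `S(x) - 1/(2x)`, vanish at `x = 1` and increase on `[1, ∞)`.
-/

open Real Filter Topology Set

local notation "γ" => Real.eulerMascheroniConstant

lemma hasSum_sub_succ_of_antitone {u : ℕ → ℝ} {l : ℝ} (hu : Antitone u)
    (hl : Tendsto u atTop (𝓝 l)) : HasSum (fun n => u n - u (n + 1)) (u 0 - l) := by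
  rw [hasSum_iff_tendsto_nat_of_nonneg (fun n => sub_nonneg.2 (hu n.le_succ))]
  simp_rw [Finset.sum_range_sub']
  exact tendsto_const_nhds.sub hl

lemma hasSum_inv_pow_sub {x : ℝ} (hx : 0 < x) {k : ℕ} (hk : k ≠ 0) :
    HasSum (fun n : ℕ => ((n + x) ^ k)⁻¹ - ((n + x + 1) ^ k)⁻¹) (x ^ k)⁻¹ := by
  have hu : Antitone fun n : ℕ => ((n + x) ^ k)⁻¹ := fun m n hmn => by
    have : (m : ℝ) ≤ n := by exact_mod_cast hmn
    exact inv_anti₀ (by positivity) (pow_le_pow_left₀ (by positivity) (by linarith) k)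
  have hl : Tendsto (fun n : ℕ => ((n + x) ^ k)⁻¹) atTop (𝓝 0) :=
    ((tendsto_pow_atTop hk).comp
      (tendsto_atTop_add_const_right _ x tendsto_natCast_atTop_atTop)).inv_tendsto_atTop
  simpa [add_right_comm] using hasSum_sub_succ_of_antitone hu hl

lemma log_add_one_sub_log {y : ℝ} (hy : 0 < y) : log (y + 1) - log y = log (1 + y⁻¹) := by
  rw [← log_div (by positivity) hy.ne']
  congr 1
  field_simp

-- The series of `log (1 + y⁻¹)` is dominated termwise by the geometric series `∑ 2u (u²)ᵏ`,
-- whose sum `2u / (1 - u²)` is the right-hand side.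
lemma log_add_one_sub_log_lt {y : ℝ} (hy : 0 < y) :
    log (y + 1) - log y < (y⁻¹ + (y + 1)⁻¹) / 2 := by
  set u := 1 / (2 * y + 1) with hu
  have hu0 : 0 < u := by positivity
  have hu1 : u < 1 := by rw [hu, div_lt_one (by positivity)]; linarith
  have hgeom : HasSum (fun k : ℕ => 2 * u * (u ^ 2) ^ k) (2 * u * (1 - u ^ 2)⁻¹) :=
    (hasSum_geometric_of_lt_one (by positivity) (by nlinarith)).mul_left (2 * u)
  have hterm (k : ℕ) :
      2 * (1 / (2 * k + 1)) * u ^ (2 * k + 1) = 2 * u * (u ^ 2) ^ k / (2 * k + 1) := by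
    ring
  have hlt := hasSum_lt (i := 1)
    (fun k => by
      rw [hterm]; exact div_le_self (by positivity) (by linarith [k.cast_nonneg (α := ℝ)]))
    (by rw [hterm]; exact div_lt_self (by positivity) (by norm_num))
    (hasSum_log_one_add_inv hy) hgeom
  rw [log_add_one_sub_log hy]
  have h1u : 1 - u ^ 2 = 4 * y * (y + 1) / (2 * y + 1) ^ 2 := by rw [hu]; field_simp; ring
  refine hlt.trans_eq ?_
  rw [h1u, hu]; field_simp; ring

lemma le_log_add_one_sub_log {y : ℝ} (hy : 0 < y) :
    2 / (2 * y + 1) + 2 / (3 * (2 * y + 1) ^ 3) ≤ log (y + 1) - log y := by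
  have hle :=
    sum_le_hasSum (Finset.range 2) (fun k _ => by positivity) (hasSum_log_one_add_inv hy)
  rw [log_add_one_sub_log hy]
  refine le_of_eq_of_le ?_ hle
  simp only [one_div, inv_pow, Finset.sum_range_succ, Finset.range_one, Finset.sum_singleton,
    CharP.cast_eq_zero, mul_zero, zero_add, inv_one, mul_one, pow_one, Nat.cast_one, Nat.reduceAdd]
  field_simp
  ring

noncomputable def eulerTerm (y : ℝ) : ℝ := y⁻¹ - (log (y + 1) - log y)

lemma inv_sub_inv_add_one_div_two_lt_eulerTerm {y : ℝ} (hy : 0 < y) :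
    (y⁻¹ - (y + 1)⁻¹) / 2 < eulerTerm y := by
  have := log_add_one_sub_log_lt hy
  rw [eulerTerm]
  linarith

lemma eulerTerm_pos {y : ℝ} (hy : 0 < y) : 0 < eulerTerm y := by
  have : (y + 1)⁻¹ < y⁻¹ := inv_strictAnti₀ hy (by linarith)
  linarith [inv_sub_inv_add_one_div_two_lt_eulerTerm hy]

lemma eulerTerm_le {y : ℝ} (hy : 0 < y) :
    eulerTerm y ≤ (y⁻¹ - (y + 1)⁻¹) / 2 + ((y ^ 2)⁻¹ - ((y + 1) ^ 2)⁻¹) / 12 := by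
  have hlog := le_log_add_one_sub_log hy
  have hgap : (y⁻¹ - (y + 1)⁻¹) / 2 + ((y ^ 2)⁻¹ - ((y + 1) ^ 2)⁻¹) / 12
      - (y⁻¹ - 2 / (2 * y + 1) - 2 / (3 * (2 * y + 1) ^ 3))
      = (2 * y ^ 2 + 2 * y + 1) / (12 * (2 * y + 1) ^ 3 * y ^ 2 * (y + 1) ^ 2) := by
    field_simp
    ring
  have : 0 ≤ (2 * y ^ 2 + 2 * y + 1) / (12 * (2 * y + 1) ^ 3 * y ^ 2 * (y + 1) ^ 2) := by
    positivity
  rw [eulerTerm]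
  linarith

lemma hasDerivAt_eulerTerm {y : ℝ} (hy : 0 < y) :
    HasDerivAt eulerTerm (-(y ^ 2 * (y + 1))⁻¹) y := by
  have hlog := (((hasDerivAt_id y).add_const 1).log (by positivity)).sub (hasDerivAt_log hy.ne')
  refine ((hasDerivAt_inv hy.ne').sub hlog).congr_deriv ?_
  simp only [id]
  field_simp
  ring

lemma le_inv_sq_mul_add_one {y : ℝ} (hy : 0 < y) :
    ((y ^ 2)⁻¹ - ((y + 1) ^ 2)⁻¹) / 2 + ((y ^ 3)⁻¹ - ((y + 1) ^ 3)⁻¹) / 6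
      - ((y ^ 5)⁻¹ - ((y + 1) ^ 5)⁻¹) / 30 ≤ (y ^ 2 * (y + 1))⁻¹ := by
  have hgap : (y ^ 2 * (y + 1))⁻¹ - (((y ^ 2)⁻¹ - ((y + 1) ^ 2)⁻¹) / 2
      + ((y ^ 3)⁻¹ - ((y + 1) ^ 3)⁻¹) / 6 - ((y ^ 5)⁻¹ - ((y + 1) ^ 5)⁻¹) / 30)
      = (5 * y ^ 2 + 5 * y + 1) / (30 * y ^ 5 * (y + 1) ^ 5) := by
    field_simp
    ring
  have : 0 ≤ (5 * y ^ 2 + 5 * y + 1) / (30 * y ^ 5 * (y + 1) ^ 5) := by positivity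
  linarith

lemma inv_sq_mul_add_one_le {y : ℝ} (hy : 0 < y) :
    (y ^ 2 * (y + 1))⁻¹ ≤ (y ^ 2)⁻¹ - ((y + 1) ^ 2)⁻¹ := by
  have hgap :
      (y ^ 2)⁻¹ - ((y + 1) ^ 2)⁻¹ - (y ^ 2 * (y + 1))⁻¹ = (y * (y + 1) ^ 2)⁻¹ := by
    field_simp
    ring
  have : 0 ≤ (y * (y + 1) ^ 2)⁻¹ := by positivity
  linarith

noncomputable def eulerSeries (x : ℝ) : ℝ := ∑' n : ℕ, eulerTerm (n + x)

lemma summable_eulerTerm {x : ℝ} (hx : 0 < x) : Summable fun n : ℕ => eulerTerm (n + x) :=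
  Summable.of_nonneg_of_le (fun _ => (eulerTerm_pos (by positivity)).le)
    (fun _ => eulerTerm_le (by positivity))
    ((((hasSum_inv_pow_sub hx one_ne_zero).div_const 2).add
      ((hasSum_inv_pow_sub hx two_ne_zero).div_const 12)).summable.congr (fun n => by simp))

lemma inv_div_two_lt_eulerSeries {x : ℝ} (hx : 0 < x) : x⁻¹ / 2 < eulerSeries x :=
  hasSum_lt (i := 0) (fun _ => (inv_sub_inv_add_one_div_two_lt_eulerTerm (by positivity)).le)
    (inv_sub_inv_add_one_div_two_lt_eulerTerm (by positivity))
    (by simpa only [pow_one] using (hasSum_inv_pow_sub hx one_ne_zero).div_const 2)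
    (summable_eulerTerm hx).hasSum

lemma eulerSeries_le {x : ℝ} (hx : 0 < x) : eulerSeries x ≤ x⁻¹ / 2 + (x ^ 2)⁻¹ / 12 := by
  have hbound := ((hasSum_inv_pow_sub hx one_ne_zero).div_const 2).add
    ((hasSum_inv_pow_sub hx two_ne_zero).div_const 12)
  simp only [pow_one] at hbound
  exact hasSum_le (fun _ => eulerTerm_le (by positivity)) (summable_eulerTerm hx).hasSum hbound

lemma eulerSeries_le_inv {x : ℝ} (hx : 1 ≤ x) : eulerSeries x ≤ x⁻¹ := by
  have : (x ^ 2)⁻¹ ≤ x⁻¹ := inv_anti₀ (by positivity) (by nlinarith)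
  linarith [eulerSeries_le (x := x) (by positivity), inv_nonneg.2 (zero_le_one.trans hx)]

lemma sum_range_eulerTerm (t : ℝ) (N : ℕ) :
    ∑ n ∈ Finset.range N, eulerTerm (n + t)
      = ∑ n ∈ Finset.range N, (n + t)⁻¹ - (log (N + t) - log t) := by
  have hstep (n : ℕ) :
      eulerTerm (n + t) = (n + t)⁻¹ - (log ((n + 1 : ℕ) + t) - log (n + t)) := by
    rw [eulerTerm]; push_cast; ring_nf
  simp_rw [hstep]
  rw [Finset.sum_sub_distrib, Finset.sum_range_sub (fun n : ℕ => log (n + t))]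
  simp

lemma eulerSeries_one : eulerSeries 1 = γ := by
  refine tendsto_nhds_unique (summable_eulerTerm one_pos).hasSum.tendsto_sum_nat ?_
  refine tendsto_harmonic_sub_log_add_one.congr fun N => ?_
  rw [sum_range_eulerTerm, harmonic]
  push_cast
  simp

lemma eulerSeries_eq_sum_range_add {t : ℝ} (ht : 0 < t) (N : ℕ) :
    eulerSeries t = ∑ n ∈ Finset.range N, eulerTerm (n + t) + eulerSeries (N + t) := by
  rw [eulerSeries, ← (summable_eulerTerm ht).sum_add_tsum_nat_add N, eulerSeries]
  congr 1
  refine tsum_congr fun n => ?_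
  push_cast
  ring_nf

lemma summable_inv_sq_mul_add_one {x : ℝ} (hx : 0 < x) :
    Summable fun n : ℕ => ((n + x) ^ 2 * (n + x + 1))⁻¹ :=
  Summable.of_nonneg_of_le (fun _ => by positivity)
    (fun _ => inv_sq_mul_add_one_le (by positivity)) (hasSum_inv_pow_sub hx two_ne_zero).summable

lemma hasDerivAt_eulerSeries {x : ℝ} (hx : 0 < x) :
    HasDerivAt eulerSeries (-∑' n : ℕ, ((n + x) ^ 2 * (n + x + 1))⁻¹) x := by
  rw [← tsum_neg]
  refine hasDerivAt_tsum_of_isPreconnected (summable_inv_sq_mul_add_one (half_pos hx)) isOpen_Ioi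
    isPreconnected_Ioi (fun n t ht => (hasDerivAt_eulerTerm ?_).comp_const_add (n : ℝ) t) ?_
    (mem_Ioi.2 (half_lt_self hx)) (summable_eulerTerm hx) (mem_Ioi.2 (half_lt_self hx))
  · exact add_pos_of_nonneg_of_pos n.cast_nonneg ((half_pos hx).trans ht)
  · intro n t ht
    have h0 : 0 < (n : ℝ) + x / 2 := by positivity
    have hle : (n : ℝ) + x / 2 ≤ n + t := by linarith [mem_Ioi.1 ht]
    rw [norm_neg, Real.norm_of_nonneg (inv_nonneg.2 (mul_nonneg (sq_nonneg _) (by linarith)))]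
    gcongr

lemma le_tsum_inv_sq_mul_add_one {x : ℝ} (hx : 0 < x) :
    (x ^ 2)⁻¹ / 2 + (x ^ 3)⁻¹ / 6 - (x ^ 5)⁻¹ / 30
      ≤ ∑' n : ℕ, ((n + x) ^ 2 * (n + x + 1))⁻¹ :=
  hasSum_le (fun _ => le_inv_sq_mul_add_one (by positivity))
    ((((hasSum_inv_pow_sub hx two_ne_zero).div_const 2).add
      ((hasSum_inv_pow_sub hx three_ne_zero).div_const 6)).sub
      ((hasSum_inv_pow_sub hx (by norm_num : 5 ≠ 0)).div_const 30))
    (summable_inv_sq_mul_add_one hx).hasSum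

lemma hasDerivAt_logGammaSeq {t : ℝ} (ht : 0 < t) (N : ℕ) :
    HasDerivAt (BohrMollerup.logGammaSeq · N)
      (log N - ∑ m ∈ Finset.range (N + 1), (m + t)⁻¹) t := by
  have hsum : HasDerivAt (fun u => ∑ m ∈ Finset.range (N + 1), log (u + m))
      (∑ m ∈ Finset.range (N + 1), (m + t)⁻¹) t := by
    refine HasDerivAt.fun_sum fun m _ => ?_
    simpa [add_comm] using ((hasDerivAt_id t).add_const (m : ℝ)).log (by positivity)
  exact (((hasDerivAt_mul_const _).add_const _).sub hsum).congr_deriv (by simp)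

lemma abs_log_sub_eulerSeries_sub_le {t : ℝ} (ht : 0 < t) {N : ℕ} (hN : 1 ≤ N) :
    |log t - eulerSeries t - (log N - ∑ m ∈ Finset.range (N + 1), (m + t)⁻¹)|
      ≤ (t + 1) / N := by
  have hN0 : (0 : ℝ) < N := by exact_mod_cast hN
  have hNt : (1 : ℝ) ≤ N + t := by linarith [(Nat.one_le_cast (α := ℝ)).2 hN]
  have herr : log t - eulerSeries t - (log N - ∑ m ∈ Finset.range (N + 1), (m + t)⁻¹)
      = (log (N + t) - log N) + (N + t)⁻¹ - eulerSeries (N + t) := by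
    rw [eulerSeries_eq_sum_range_add ht N, sum_range_eulerTerm, Finset.sum_range_succ]
    ring
  have hlog : log (N + t) - log N ≤ t / N := by
    rw [← log_div (by positivity) hN0.ne']
    linarith [log_le_sub_one_of_pos (x := (N + t) / N) (by positivity),
      show (N + t) / N - 1 = t / N by field_simp; ring]
  have hlog0 : 0 ≤ log (N + t) - log N := sub_nonneg.2 (log_le_log hN0 (by linarith))
  have hinv : (N + t)⁻¹ ≤ (N : ℝ)⁻¹ := inv_anti₀ hN0 (by linarith)
  have hS := eulerSeries_le_inv hNt
  have hS0 : 0 < eulerSeries (N + t) :=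
    (div_pos (inv_pos.2 (by linarith)) two_pos).trans (inv_div_two_lt_eulerSeries (by linarith))
  have htN : (t + 1) / N = t / N + (N : ℝ)⁻¹ := by ring
  rw [herr, abs_le]
  constructor <;> linarith

lemma hasDerivAt_log_Gamma {x : ℝ} (hx : 0 < x) :
    HasDerivAt (fun t => log (Gamma t)) (log x - eulerSeries x) x := by
  refine hasDerivAt_of_tendstoUniformlyOn (l := atTop) (g' := fun t => log t - eulerSeries t)
    (s := Ioo 0 (x + 1)) isOpen_Ioo ?_
    (Eventually.of_forall fun N t ht => hasDerivAt_logGammaSeq ht.1 N)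
    (fun t ht => BohrMollerup.tendsto_log_gamma ht.1) ⟨hx, by linarith⟩
  rw [Metric.tendstoUniformlyOn_iff]
  intro ε hε
  have hsmall : ∀ᶠ N : ℕ in atTop, (x + 2) / N < ε :=
    (tendsto_const_nhds.div_atTop tendsto_natCast_atTop_atTop).eventually_lt_const hε
  filter_upwards [hsmall, eventually_ge_atTop 1] with N hNε hN t ht
  rw [Real.dist_eq]
  calc _ ≤ (t + 1) / N := abs_log_sub_eulerSeries_sub_le ht.1 hN
    _ ≤ (x + 2) / N := div_le_div_of_nonneg_right (by linarith [ht.2]) N.cast_nonneg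
    _ < ε := hNε

lemma lt_of_hasDerivAt_pos {f f' : ℝ → ℝ} {a b : ℝ}
    (hf : ∀ t, a ≤ t → HasDerivAt f (f' t) t) (hf' : ∀ t, a < t → 0 < f' t) (hab : a < b) :
    f a < f b := by
  refine strictMonoOn_of_deriv_pos (convex_Ici a)
    (fun t ht => (hf t ht).continuousAt.continuousWithinAt) (fun t ht => ?_)
    self_mem_Ici hab.le hab
  rw [interior_Ici] at ht
  rw [(hf t ht.le).deriv]
  exact hf' t ht

lemma mul_eulerSeries_lt {x : ℝ} (hx : 1 < x) : x * eulerSeries x < γ := by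
  rw [← eulerSeries_one, ← neg_lt_neg_iff, ← one_mul (eulerSeries 1)]
  refine lt_of_hasDerivAt_pos (f := fun t => -(t * eulerSeries t))
    (fun t ht => ((hasDerivAt_id t).mul (hasDerivAt_eulerSeries (by linarith))).neg)
    (fun t ht => ?_) hx
  have ht0 : 0 < t := by linarith
  have hS := eulerSeries_le ht0
  have hT := mul_le_mul_of_nonneg_left (le_tsum_inv_sq_mul_add_one ht0) ht0.le
  have hgap :
      t * ((t ^ 2)⁻¹ / 2 + (t ^ 3)⁻¹ / 6 - (t ^ 5)⁻¹ / 30) - (t⁻¹ / 2 + (t ^ 2)⁻¹ / 12)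
        = (5 * t ^ 2 - 2) / (60 * t ^ 4) := by
    field_simp
    ring
  have : 0 < (5 * t ^ 2 - 2) / (60 * t ^ 4) := div_pos (by nlinarith) (by positivity)
  simp only [id]
  linarith

lemma lt_log_Gamma {x : ℝ} (hx : 1 < x) : (x - γ) * log x - x + 1 < log (Gamma x) := by
  have hderiv (t : ℝ) (ht : 1 ≤ t) :
      HasDerivAt (fun t => log (Gamma t) - ((t - γ) * log t - t + 1))
        ((γ - t * eulerSeries t) / t) t := by
    have ht0 : 0 < t := by linarith
    refine ((hasDerivAt_log_Gamma ht0).sub ((((hasDerivAt_id t).sub_const γ).mul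
      (hasDerivAt_log ht0.ne')).sub (hasDerivAt_id t) |>.add_const 1)).congr_deriv ?_
    simp only [id]
    field_simp
    ring
  simpa using lt_of_hasDerivAt_pos hderiv
    (fun t ht => div_pos (sub_pos.2 (mul_eulerSeries_lt ht)) (by linarith)) hx

lemma log_Gamma_lt {x : ℝ} (hx : 1 < x) : log (Gamma x) < (x - 1 / 2) * log x - x + 1 := by
  have hderiv (t : ℝ) (ht : 1 ≤ t) :
      HasDerivAt (fun t => (t - 1 / 2) * log t - t + 1 - log (Gamma t))
        (eulerSeries t - t⁻¹ / 2) t := by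
    have ht0 : 0 < t := by linarith
    refine (((((hasDerivAt_id t).sub_const (1 / 2)).mul (hasDerivAt_log ht0.ne')).sub
      (hasDerivAt_id t) |>.add_const 1).sub (hasDerivAt_log_Gamma ht0)).congr_deriv ?_
    simp only [id]
    field_simp
    ring
  simpa using lt_of_hasDerivAt_pos hderiv
    (fun t ht => sub_pos.2 (inv_div_two_lt_eulerSeries (by linarith))) hx

lemma rpow_div_exp_sub_one {x : ℝ} (hx : 0 < x) (c : ℝ) :
    x ^ c / exp (x - 1) = exp (c * log x - x + 1) := by
  rw [rpow_def_of_pos hx, ← exp_sub]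
  ring_nf

/-- For all real `x > 1`, `x^(x-γ)/e^(x-1) < Γ(x) < x^(x-1/2)/e^(x-1)`,
where `γ` is the Euler–Mascheroni constant. -/
theorem gamma_strict_bounds (x : ℝ) (hx : 1 < x) :
    x ^ (x - Real.eulerMascheroniConstant) / Real.exp (x - 1) < Real.Gamma x ∧
    Real.Gamma x < x ^ (x - 1/2) / Real.exp (x - 1) := by
  have hx0 : 0 < x := zero_lt_one.trans hx
  rw [rpow_div_exp_sub_one hx0, rpow_div_exp_sub_one hx0, ← exp_log (Gamma_pos_of_pos hx0),
    exp_lt_exp, exp_lt_exp]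
  exact ⟨lt_log_Gamma hx, log_Gamma_lt hx⟩
end

section
/- For β ∈ (0,1), the sequence A_j = Γ(2jβ+1)/Γ((2j+1)β+1) is strictly decreasing in j ≥ 1, i.e. A_j < A_{j-1} for all j ≥ 2. -/
/-!
Put `x = 2(j-1)β + 1` and `c = 2β`. The claim reads `Γ(x+c)/Γ(x+β+c) < Γ(x)/Γ(x+β)`, i.e. that
`x ↦ Γ(x+c)/Γ(x)` is strictly increasing. This ratio is `Γ(c)/B(x,c)`, and the Beta function
`B(x,c) = ∫₀¹ t^(x-1) (1-t)^(c-1) dt` is strictly decreasing in `x`, since `t^(x-1)` is for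
each `t ∈ (0,1)`.
-/

open Real MeasureTheory Set

namespace ProbabilityTheory

lemma cpow_mul_one_sub_cpow_eq_ofReal {t : ℝ} (ht : t ∈ Icc (0 : ℝ) 1) (a b : ℝ) :
    (t : ℂ) ^ ((a : ℂ) - 1) * (1 - (t : ℂ)) ^ ((b : ℂ) - 1) =
      ((t ^ (a - 1) * (1 - t) ^ (b - 1) : ℝ) : ℂ) := by
  push_cast [Complex.ofReal_cpow ht.1, Complex.ofReal_cpow (sub_nonneg.2 ht.2)]
  rfl

lemma intervalIntegrable_rpow_mul_one_sub_rpow {a b : ℝ} (ha : 0 < a) (hb : 0 < b) :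
    IntervalIntegrable (fun t : ℝ => t ^ (a - 1) * (1 - t) ^ (b - 1)) volume 0 1 := by
  have hC := (Complex.betaIntegral_convergent (u := a) (v := b) (by simpa) (by simpa)).congr
    (g := fun t : ℝ => ((t ^ (a - 1) * (1 - t) ^ (b - 1) : ℝ) : ℂ)) fun t ht => by
      rw [uIoc_of_le zero_le_one] at ht
      exact cpow_mul_one_sub_cpow_eq_ofReal (Ioc_subset_Icc_self ht) a b
  refine hC.norm.congr fun t ht => ?_
  rw [uIoc_of_le zero_le_one] at ht
  simp only [Complex.norm_real, Real.norm_eq_abs]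
  exact abs_of_nonneg (mul_nonneg (rpow_nonneg ht.1.le _) (rpow_nonneg (sub_nonneg.2 ht.2) _))

lemma beta_eq_integral {a b : ℝ} (ha : 0 < a) (hb : 0 < b) :
    beta a b = ∫ t in (0 : ℝ)..1, t ^ (a - 1) * (1 - t) ^ (b - 1) := by
  rw [beta_eq_betaIntegralReal a b ha hb, Complex.betaIntegral,
    ← Complex.ofReal_re (∫ _ in _.._, _), ← intervalIntegral.integral_ofReal]
  congr 1
  refine intervalIntegral.integral_congr fun t ht => ?_
  rw [uIcc_of_le zero_le_one] at ht
  exact cpow_mul_one_sub_cpow_eq_ofReal ht a b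

lemma beta_strictAntiOn_left {b : ℝ} (hb : 0 < b) : StrictAntiOn (beta · b) (Ioi 0) := by
  intro a₁ ha₁ a₂ ha₂ h
  have h₁ := intervalIntegrable_rpow_mul_one_sub_rpow ha₁ hb
  have h₂ := intervalIntegrable_rpow_mul_one_sub_rpow ha₂ hb
  show beta a₂ b < beta a₁ b
  rw [beta_eq_integral ha₁ hb, beta_eq_integral ha₂ hb, ← sub_pos,
    ← intervalIntegral.integral_sub h₁ h₂]
  refine intervalIntegral.intervalIntegral_pos_of_pos_on (h₁.sub h₂) (fun t ht => ?_) zero_lt_one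
  rw [← sub_mul]
  exact mul_pos (sub_pos.2 (rpow_lt_rpow_of_exponent_gt ht.1 ht.2 (by linarith)))
    (rpow_pos_of_pos (sub_pos.2 ht.2) _)

end ProbabilityTheory

lemma Real.Gamma_add_div_Gamma_strictMonoOn {c : ℝ} (hc : 0 < c) :
    StrictMonoOn (fun x => Gamma (x + c) / Gamma x) (Ioi 0) := by
  intro x (hx : 0 < x) y (hy : 0 < y) hxy
  have h := ProbabilityTheory.beta_strictAntiOn_left hc hx hy hxy
  have hΓ : ∀ z, 0 < z → 0 < Gamma z := fun z => Gamma_pos_of_pos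
  simp only [ProbabilityTheory.beta] at h ⊢
  rw [div_lt_div_iff₀ (hΓ _ (by positivity)) (hΓ _ (by positivity))] at h
  rw [div_lt_div_iff₀ (hΓ _ hx) (hΓ _ hy)]
  nlinarith [hΓ c hc]

theorem gamma_ratio_strict_anti_general (β : ℝ) (hβ0 : 0 < β)
    (j : ℕ) (hj : 2 ≤ j) :
    Real.Gamma (2 * j * β + 1) / Real.Gamma ((2 * j + 1) * β + 1) <
      Real.Gamma (2 * (j - 1 : ℕ) * β + 1) / Real.Gamma ((2 * (j - 1 : ℕ) + 1) * β + 1) := by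
  obtain ⟨k, rfl⟩ : ∃ k, j = k + 1 := ⟨j - 1, by omega⟩
  set x : ℝ := 2 * k * β + 1
  have hx : 0 < x := by positivity
  have h := Gamma_add_div_Gamma_strictMonoOn (by positivity : 0 < 2 * β) hx
    (by positivity : 0 < x + β) (by linarith : x < x + β)
  have hx₁ : 2 * ((k + 1 : ℕ) : ℝ) * β + 1 = x + 2 * β := by push_cast; ring
  have hx₂ : (2 * ((k + 1 : ℕ) : ℝ) + 1) * β + 1 = x + β + 2 * β := by push_cast; ring
  have hx₃ : (2 * ((k + 1 - 1 : ℕ) : ℝ) + 1) * β + 1 = x + β := by push_cast; ring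
  rw [hx₁, hx₂, hx₃, Nat.add_sub_cancel]
  have hΓ : ∀ z, 0 < z → 0 < Gamma z := fun z => Gamma_pos_of_pos
  rw [div_lt_div_iff₀ (hΓ _ hx) (hΓ _ (by positivity))] at h
  rw [div_lt_div_iff₀ (hΓ _ (by positivity)) (hΓ _ (by positivity))]
  linarith

/-- For `β ∈ (0,1)`, the sequence `A_j = Γ(2jβ+1)/Γ((2j+1)β+1)` is strictly
decreasing in `j ≥ 1`, i.e. `A_j < A_{j-1}` for all `j ≥ 2`. -/
theorem gamma_ratio_strict_anti (β : ℝ) (hβ0 : 0 < β) (hβ1 : β < 1)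
    (j : ℕ) (hj : 2 ≤ j) :
    Real.Gamma (2 * j * β + 1) / Real.Gamma ((2 * j + 1) * β + 1) <
      Real.Gamma (2 * (j - 1 : ℕ) * β + 1) / Real.Gamma ((2 * (j - 1 : ℕ) + 1) * β + 1) :=
  gamma_ratio_strict_anti_general β hβ0 j hj
end
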